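/- Let p > 3 be a prime, G = A × P with A = E_9 and P = C_p, let 𝒜 be a dense S-ring over G, and let X be a basic set of 𝒜. Then the partition Π_A(X) of X_A into the classes of the equivalence relation a ∼ b ⇔ X(a) = X(b) is a regular partition of X_A. -/

import Mathlib

open scoped Pointwise

/-- The element `\underline{X} = Σ_{x∈X} x` of the integral group ring `ℤG`. -/
noncomputable def grpSum {G : Type*} [Group G] [Fintype G] (X : Set G) :
    MonoidAlgebra ℤ G :=
  ∑ x : G, X.indicator (fun g => MonoidAlgebra.single g (1 : ℤ)) x

/-- A Schur ring (S-ring) over a finite group `G`, described by its partition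
into basic sets: (S1) `{1}` is a basic set, (S2) the class of basic sets is
closed under inverses, (S3) the ℤ-span of the sums `\underline{X}` is closed
under multiplication (i.e. is a subring of `ℤG`). -/
structure SchurRing (G : Type*) [Group G] [Fintype G] where
  basicSets : Set (Set G)
  nonempty_mem : ∀ X ∈ basicSets, X.Nonempty
  cover : ∀ g : G, ∃ X ∈ basicSets, g ∈ X
  disjoint' : ∀ X ∈ basicSets, ∀ Y ∈ basicSets, X ≠ Y → X ∩ Y = ∅
  one_mem : {(1 : G)} ∈ basicSets
  inv_mem : ∀ X ∈ basicSets, X⁻¹ ∈ basicSets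
  mul_mem : ∀ X ∈ basicSets, ∀ Y ∈ basicSets,
    grpSum X * grpSum Y ∈ Submodule.span ℤ (grpSum '' basicSets)

namespace SchurRing

variable {G : Type*} [Group G] [Fintype G]

/-- An `𝒜`-set: a union of basic sets. -/
def IsASet (A : SchurRing G) (S : Set G) : Prop :=
  ∃ T ⊆ A.basicSets, S = ⋃₀ T

/-- An `𝒜`-subgroup: a subgroup that is an `𝒜`-set. -/
def IsASubgroup (A : SchurRing G) (H : Subgroup G) : Prop :=
  A.IsASet (H : Set G)

/-- `𝒜` is schurian: its basic sets are the orbits of the stabilizer of `1`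
in some group `K` with `G_right ≤ K ≤ Sym(G)`. -/
def IsSchurian (A : SchurRing G) : Prop :=
  ∃ K : Subgroup (Equiv.Perm G), (∀ g : G, Equiv.mulRight g ∈ K) ∧
    A.basicSets = Set.range fun x : G =>
      MulAction.orbit (MulAction.stabilizer K (1 : G)) x

/-- `𝒜` is cyclotomic: its basic sets are the orbits of a subgroup of `Aut(G)`. -/
def IsCyclotomic (A : SchurRing G) : Prop :=
  ∃ M : Subgroup (MulAut G),
    A.basicSets = Set.range fun x : G => MulAction.orbit M x

/-- `𝒜` is trivial: its basic sets are `{1}` and `G ∖ {1}`. -/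
def IsTrivial (A : SchurRing G) : Prop :=
  A.basicSets ⊆ {{(1 : G)}, {(1 : G)}ᶜ}

/-- `𝒜 = 𝒜_H ⊗ 𝒜_K`: an internal tensor product decomposition of `𝒜`
with respect to the internal direct product `G = H × K`. -/
def IsTensorDecomp (A : SchurRing G) (H K : Subgroup G) : Prop :=
  A.IsASubgroup H ∧ A.IsASubgroup K ∧ H ⊓ K = ⊥ ∧ H ⊔ K = ⊤ ∧
  ∀ X ∈ A.basicSets, ∃ X₁ ∈ A.basicSets, ∃ X₂ ∈ A.basicSets,
    X₁ ⊆ (H : Set G) ∧ X₂ ⊆ (K : Set G) ∧ X = X₁ * X₂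

/-- `𝒜` is the `U/L`-wreath product: `U`, `L` are `𝒜`-subgroups, `L ⊴ G`,
`L ≤ U`, and `L ≤ rad(X)` for every basic set `X` outside `U`. -/
def IsWreathSection (A : SchurRing G) (U L : Subgroup G) : Prop :=
  A.IsASubgroup U ∧ A.IsASubgroup L ∧ L ≤ U ∧ L.Normal ∧
  ∀ X ∈ A.basicSets, ¬ X ⊆ (U : Set G) →
    ∀ g ∈ L, (g * ·) '' X = X ∧ (· * g) '' X = X

end SchurRing

/-- A finite group is a Schur group if every S-ring over it is schurian. -/
def IsSchurGroup (G : Type*) [Group G] [Fintype G] : Prop :=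
  ∀ A : SchurRing G, A.IsSchurian

/-- A Cayley isomorphism between S-rings: a group isomorphism mapping the
basic sets of `𝒜` onto the basic sets of `𝒜'`. -/
def IsCayleyIso {G G' : Type*} [Group G] [Fintype G] [Group G'] [Fintype G']
    (A : SchurRing G) (A' : SchurRing G') (f : G ≃* G') : Prop :=
  (fun X : Set G => ⇑f '' X) '' A.basicSets = A'.basicSets

open scoped BigOperators

/-- Componentwise (Hadamard) multiplication `∘` in the group ring `ℤG`. -/
noncomputable def hadamard {G : Type*} [Group G] [Fintype G]
    (a b : MonoidAlgebra ℤ G) : MonoidAlgebra ℤ G :=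
  MonoidAlgebra.ofCoeff (Finsupp.zipWith (· * ·) (mul_zero 0) a.coeff b.coeff)

/-- A regular partition of a set `X` (an orbit of a subgroup of `Aut(G)`):
a uniform partition satisfying (R1), (R2), (R3) in case `X = X⁻¹`. -/
def IsRegularPartition {G : Type*} [CommGroup G] [Fintype G]
    (X : Set G) (P : Set (Set G)) : Prop :=
  (∀ Y ∈ P, Y ⊆ X ∧ Y.Nonempty) ∧
  (∀ x ∈ X, ∃! Y : Set G, Y ∈ P ∧ x ∈ Y) ∧
  (∀ Y ∈ P, ∀ Z ∈ P, Y.ncard = Z.ncard) ∧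
  (X⁻¹ = X →
    ((fun Y : Set G => Y⁻¹) '' P = P) ∧
    ((∀ Y ∈ P, Y⁻¹ = Y) ∨ (∀ Y ∈ P, Y⁻¹ ≠ Y)) ∧
    (∃ α : ℕ, hadamard (grpSum X) (∑ᶠ Y ∈ P, grpSum Y * grpSum Y⁻¹) =
      (α : ℤ) • grpSum X))

/-- `(M, L)` is a standard pair for the basic set `X` and the regular
partition `P`: `L ≤ M ≤ Aut(G)`, `P` is the set of orbits of `L` on `X`,
`X` is an orbit of `M`, and `L` is the kernel of the action of `M` on `P`. -/
def IsStandardPair {G : Type*} [Group G] [Fintype G]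
    (X : Set G) (P : Set (Set G)) (M L : Subgroup (MulAut G)) : Prop :=
  L ≤ M ∧ (∃ x, X = MulAction.orbit M x) ∧
  (P = {Z : Set G | ∃ x ∈ X, Z = MulAction.orbit L x}) ∧
  (∀ m : MulAut G, m ∈ L ↔ m ∈ M ∧ ∀ Y ∈ P, ⇑m '' Y = Y)

/-- The elementary abelian group of order 9. -/
abbrev E₉ := Multiplicative (ZMod 3 × ZMod 3)

/-!
The engine is Schur's multiplier theorem: for `m` prime to `|G|` the image of a basic set under
`g ↦ g ^ m` is again basic. Over `H × C_p` with `gcd(|H|, p) = 1` this yields the basic sets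
`ψ_m(X)` and `ι_m(X)`, images of `X` under `(h, x) ↦ (h, x ^ m)` and `(h, x) ↦ (h⁻¹, x ^ m)`.

By density `X` lies in `H × 1` or avoids it, so the `ψ_m` act transitively on the points of a
row of `X`; hence rows sharing a point have equal fibres, the classes of `Π_A(X)` are the columns
`{u | (u, s) ∈ X}`, and column sizes are the coefficients of `X̲ · (H × 1)̲` on `X`. Some `ι_m`
fixes `X`, which gives (R1); a self-inverse class forces some `ψ_m` to fix `X`, which gives (R2).
For (R3), the coefficient of `X̲ X̲⁻¹` at `(b, 1)` is the common fibre size times the coefficient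
of `Σ Z̲ Z̲⁻¹` at `b`, and it does not depend on `b ∈ X_A`.
-/

open scoped Classical

open MonoidAlgebra

theorem pow_eq_pow_of_modEq_natCard {G : Type*} [Group G] (g : G) {m n : ℕ}
    (h : m ≡ n [MOD Nat.card G]) : g ^ m = g ^ n := by
  rw [← pow_mod_natCard, h, pow_mod_natCard]

section GroupRing

variable {G : Type*} [Group G] [Fintype G]

theorem grpSum_eq_sum (X : Set G) : grpSum X = ∑ x ∈ X.toFinset, single x 1 := by
  rw [grpSum, ← Finset.sum_filter_add_sum_filter_not Finset.univ (· ∈ X), Finset.sum_eq_zero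
    (fun x hx => Set.indicator_of_notMem (Finset.mem_filter.1 hx).2 _), add_zero]
  exact Finset.sum_congr (by ext; simp) fun x hx => Set.indicator_of_mem (by simpa using hx) _

theorem grpSum_one : grpSum ({1} : Set G) = 1 := by
  rw [grpSum_eq_sum, Set.toFinset_singleton, Finset.sum_singleton, one_def]

theorem coeff_grpSum (X : Set G) (g : G) : (grpSum X).coeff g = X.indicator 1 g := by
  rw [grpSum_eq_sum, coeff_sum, Finset.sum_apply', Set.indicator_apply]
  simp [coeff_single, Finsupp.single_apply]

theorem coeff_mul_grpSum (ξ : MonoidAlgebra ℤ G) (T : Set G) (g : G) :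
    (ξ * grpSum T).coeff g = ∑ t ∈ T.toFinset, ξ.coeff (g * t⁻¹) := by
  simp [grpSum_eq_sum, Finset.mul_sum, coeff_sum, Finset.sum_apply', coeff_mul_single_apply]

theorem coeff_grpSum_mul_grpSum_inv (S T : Set G) (g : G) :
    (grpSum S * grpSum T⁻¹).coeff g = {t ∈ T.toFinset | g * t ∈ S}.card := by
  rw [coeff_mul_grpSum, Finset.card_filter, Nat.cast_sum]
  refine Finset.sum_nbij' (·⁻¹) (·⁻¹) ?_ ?_ ?_ ?_ ?_ <;>
    simp [coeff_grpSum, Set.indicator_apply]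

theorem sum_coeff_grpSum_comp {ι : Type*} [Fintype ι] (X : Set G)
    (f : ι → G) : ∑ i, (grpSum X).coeff (f i) = (f ⁻¹' X).ncard := by
  simp only [coeff_grpSum, Set.indicator_apply, Pi.one_apply]
  rw [Finset.sum_boole, Set.ncard_eq_toFinset_card']
  simp

theorem hadamard_grpSum_eq_smul {S : Set G} {ξ : MonoidAlgebra ℤ G} {α : ℤ}
    (h : ∀ g ∈ S, ξ.coeff g = α) : hadamard (grpSum S) ξ = α • grpSum S := by
  ext g
  simp only [hadamard, coeff_ofCoeff, Finsupp.zipWith_apply, coeff_smul_apply, coeff_grpSum,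
    Set.indicator_apply, smul_eq_mul]
  split_ifs with hg
  · simp [h g hg]
  · simp

end GroupRing

section ProductGroupRing

variable {H K : Type*} [Group H] [Fintype H] [Group K] [Fintype K]

theorem coeff_mul_grpSum_prod_top_bot (ξ : MonoidAlgebra ℤ (H × K)) (g : H × K) :
    (ξ * grpSum (((⊤ : Subgroup H).prod (⊥ : Subgroup K) : Subgroup (H × K)) : Set (H × K))).coeff
      g = ∑ h : H, ξ.coeff (h, g.2) := by
  rw [coeff_mul_grpSum]
  refine Finset.sum_nbij' (fun t => g.1 * t.1⁻¹) (fun h => (h⁻¹ * g.1, 1)) ?_ ?_ ?_ ?_ ?_ <;>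
    simp [Subgroup.mem_prod, Prod.ext_iff, Prod.mul_def]

theorem coeff_mul_grpSum_prod_bot_top (ξ : MonoidAlgebra ℤ (H × K)) (g : H × K) :
    (ξ * grpSum (((⊥ : Subgroup H).prod (⊤ : Subgroup K) : Subgroup (H × K)) : Set (H × K))).coeff
      g = ∑ k : K, ξ.coeff (g.1, k) := by
  rw [coeff_mul_grpSum]
  refine Finset.sum_nbij' (fun t => g.2 * t.2⁻¹) (fun k => (1, k⁻¹ * g.2)) ?_ ?_ ?_ ?_ ?_ <;>
    simp +contextual [Subgroup.mem_prod, Prod.ext_iff, Prod.mul_def]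

end ProductGroupRing

namespace SchurRing

section Basic

variable {G : Type*} [Group G] [Fintype G] (A : SchurRing G)

theorem eq_of_mem_of_mem {X Y : Set G} (hX : X ∈ A.basicSets) (hY : Y ∈ A.basicSets) {g : G}
    (hgX : g ∈ X) (hgY : g ∈ Y) : X = Y := by
  by_contra hne
  exact (A.disjoint' X hX Y hY hne).subset ⟨hgX, hgY⟩

theorem span_mul_mem {ξ η : MonoidAlgebra ℤ G}
    (hξ : ξ ∈ Submodule.span ℤ (grpSum '' A.basicSets))
    (hη : η ∈ Submodule.span ℤ (grpSum '' A.basicSets)) :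
    ξ * η ∈ Submodule.span ℤ (grpSum '' A.basicSets) := by
  induction hξ using Submodule.span_induction with
  | mem x hx =>
    induction hη using Submodule.span_induction with
    | mem y hy =>
      obtain ⟨X, hX, rfl⟩ := hx
      obtain ⟨Y, hY, rfl⟩ := hy
      exact A.mul_mem X hX Y hY
    | zero => simp
    | add y z _ _ hy hz => rw [mul_add]; exact Submodule.add_mem _ hy hz
    | smul n y _ hy => rw [mul_smul_comm]; exact Submodule.smul_mem _ n hy
  | zero => simp
  | add x y _ _ hx hy => rw [add_mul]; exact Submodule.add_mem _ hx hy
  | smul n x _ hx => rw [smul_mul_assoc]; exact Submodule.smul_mem _ n hx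

noncomputable def toSubring : Subring (MonoidAlgebra ℤ G) where
  __ := (Submodule.span ℤ (grpSum '' A.basicSets)).toAddSubgroup
  one_mem' := grpSum_one (G := G) ▸ Submodule.subset_span ⟨_, A.one_mem, rfl⟩
  mul_mem' := A.span_mul_mem

theorem grpSum_mem_toSubring {X : Set G} (hX : X ∈ A.basicSets) : grpSum X ∈ A.toSubring :=
  Submodule.subset_span ⟨X, hX, rfl⟩

theorem coeff_eq_of_mem_toSubring {ξ : MonoidAlgebra ℤ G} (hξ : ξ ∈ A.toSubring)
    {X : Set G} (hX : X ∈ A.basicSets) {g h : G} (hg : g ∈ X) (hh : h ∈ X) :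
    ξ.coeff g = ξ.coeff h := by
  induction hξ using Submodule.span_induction with
  | mem x hx =>
    obtain ⟨Y, hY, rfl⟩ := hx
    have hgh : g ∈ Y ↔ h ∈ Y := ⟨fun hgY => A.eq_of_mem_of_mem hX hY hg hgY ▸ hh,
      fun hhY => A.eq_of_mem_of_mem hX hY hh hhY ▸ hg⟩
    simp only [coeff_grpSum, Set.indicator_apply, Pi.one_apply, hgh]
  | zero => rfl
  | add x y _ _ hx hy => simp only [coeff_add, Finsupp.add_apply, hx, hy]
  | smul n x _ hx => simp only [coeff_smul_apply, hx]

theorem isASet_iff {S : Set G} :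
    A.IsASet S ↔ ∀ X ∈ A.basicSets, ∀ g ∈ X, g ∈ S → X ⊆ S := by
  constructor
  · rintro ⟨T, hT, rfl⟩ X hX g hgX ⟨Y, hY, hgY⟩
    exact A.eq_of_mem_of_mem hX (hT hY) hgX hgY ▸ Set.subset_sUnion_of_mem hY
  · intro h
    refine ⟨{X ∈ A.basicSets | X ⊆ S}, fun X hX => hX.1, ?_⟩
    refine subset_antisymm (fun g hg => ?_) (Set.sUnion_subset fun X hX => hX.2)
    obtain ⟨X, hX, hgX⟩ := A.cover g
    exact ⟨X, ⟨hX, h X hX g hgX hg⟩, hgX⟩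

theorem isASet_of_mem {X : Set G} (hX : X ∈ A.basicSets) : A.IsASet X :=
  ⟨{X}, Set.singleton_subset_iff.2 hX, Set.sUnion_singleton X |>.symm⟩

theorem isASet_empty : A.IsASet ∅ := ⟨∅, Set.empty_subset _, Set.sUnion_empty.symm⟩

variable {A} in
theorem IsASet.subset {S : Set G} (hS : A.IsASet S) {X : Set G} (hX : X ∈ A.basicSets) {g : G}
    (hgX : g ∈ X) (hgS : g ∈ S) : X ⊆ S :=
  (A.isASet_iff.1 hS) X hX g hgX hgS

theorem isASet_setOf_coeff {ξ : MonoidAlgebra ℤ G} (hξ : ξ ∈ A.toSubring) (P : ℤ → Prop) :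
    A.IsASet {g | P (ξ.coeff g)} :=
  A.isASet_iff.2 fun _ hX g hgX hg h hhX => by
    rwa [Set.mem_ofPred_eq, ← A.coeff_eq_of_mem_toSubring hξ hX hgX hhX]

variable {A} in
theorem IsASet.grpSum_mem_toSubring {S : Set G} (hS : A.IsASet S) :
    grpSum S ∈ A.toSubring := by
  have hfin : A.basicSets.Finite := Set.toFinite _
  have hsum : grpSum S = ∑ X ∈ hfin.toFinset with X ⊆ S, grpSum X := by
    ext g
    obtain ⟨X, hX, hgX⟩ := A.cover g
    have hcoeff : ∀ Y ∈ A.basicSets, Y.indicator (1 : G → ℤ) g = if Y = X then 1 else 0 := by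
      intro Y hY
      by_cases hYX : Y = X
      · simp [hYX, hgX]
      · simpa [hYX, Set.indicator_apply] using fun hgY => hYX (A.eq_of_mem_of_mem hY hX hgY hgX)
    rw [coeff_grpSum, coeff_sum, Finset.sum_apply', Finset.sum_congr rfl fun Y hY =>
      (coeff_grpSum Y g).trans (hcoeff Y (by simpa using (Finset.mem_filter.1 hY).1)),
      Finset.sum_ite_eq']
    by_cases hgS : g ∈ S
    · simp [hgS, hX, hS.subset hX hgX hgS]
    · simpa [hgS, hX] using fun hXS : X ⊆ S => hgS (hXS hgX)
  rw [hsum]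
  exact Subring.sum_mem _ fun X hX =>
    A.grpSum_mem_toSubring (by simpa using (Finset.mem_filter.1 hX).1)

theorem eq_of_isASet_of_subset {X S : Set G} (hX : X ∈ A.basicSets) (hS : A.IsASet S)
    (hSX : S ⊆ X) (hne : S.Nonempty) : S = X :=
  let ⟨_, hg⟩ := hne
  hSX.antisymm (hS.subset hX (hSX hg) hg)

variable {A} in
theorem IsASet.image {f : G → G} (hf : ∀ X ∈ A.basicSets, A.IsASet (f '' X)) {S : Set G}
    (hS : A.IsASet S) : A.IsASet (f '' S) := by
  refine A.isASet_iff.2 fun Y hY g hgY ⟨s, hsS, hsg⟩ => ?_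
  obtain ⟨X, hX, hsX⟩ := A.cover s
  exact ((hf X hX).subset hY hgY ⟨s, hsX, hsg⟩).trans
    (Set.image_mono (hS.subset hX hsX hsS))

theorem image_mem_basicSets {f : G → G} (hf : Function.Injective f)
    (hA : ∀ S, A.IsASet S → A.IsASet (f '' S)) {X : Set G} (hX : X ∈ A.basicSets) :
    f '' X ∈ A.basicSets := by
  let F : {S // A.IsASet S} → {S // A.IsASet S} := fun S => ⟨f '' S, hA S S.2⟩
  have hF : Function.Surjective F := Finite.surjective_of_injective fun S T hST =>
    Subtype.ext (Set.image_injective.2 hf (congrArg Subtype.val hST))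
  obtain ⟨x, hx⟩ := A.nonempty_mem X hX
  obtain ⟨Y, hY, hfx⟩ := A.cover (f x)
  obtain ⟨⟨S, hS⟩, hSY⟩ := hF ⟨Y, A.isASet_of_mem hY⟩
  replace hSY : f '' S = Y := congrArg Subtype.val hSY
  have hYX : Y ⊆ f '' X := (hA X (A.isASet_of_mem hX)).subset hY hfx ⟨x, hx, rfl⟩
  have hSX : S = X := by
    refine A.eq_of_isASet_of_subset hX hS ?_ ?_
    · exact (Set.image_subset_image_iff hf).1 (hSY ▸ hYX)
    · obtain ⟨s, hs, -⟩ := hSY ▸ hfx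
      exact ⟨s, hs⟩
  rwa [← hSX, hSY]

end Basic

section Multiplier

variable {G : Type*} [CommGroup G] [Fintype G] (A : SchurRing G)

/-- Frobenius: modulo `q`, the `q`-th power of `grpSum X` is `grpSum` of the image of `X` under
`g ↦ g ^ q`; as the coefficients of `grpSum X ^ q` are constant on basic sets, so is the
indicator of that image. -/
theorem isASet_image_pow_of_prime {q : ℕ} [Fact q.Prime] (hq : (Nat.card G).Coprime q)
    {X : Set G} (hX : X ∈ A.basicSets) : A.IsASet ((· ^ q) '' X) := by
  have hinj : Function.Injective (· ^ q : G → G) := hq.pow_left_bijective.injective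
  have : CharP (MonoidAlgebra (ZMod q) G) q := charP_of_injective_algebraMap' (ZMod q) q
  set red := mapRingHom G (Int.castRingHom (ZMod q))
  have hfrob : red (grpSum X ^ q) = red (grpSum ((· ^ q) '' X)) := by
    rw [map_pow, grpSum_eq_sum, grpSum_eq_sum, map_sum, map_sum, sum_pow_char,
      Set.toFinset_image, Finset.sum_image hinj.injOn]
    simp [red, mapRingHom, single_pow]
  convert A.isASet_setOf_coeff (A.toSubring.pow_mem (A.grpSum_mem_toSubring hX) q)
    (fun n => (n : ZMod q) = 1)
  ext g
  have := congrArg (fun ξ => ξ.coeff g) hfrob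
  simp only [red, coeff_mapRingHom, coeff_grpSum, Set.indicator_apply, Pi.one_apply,
    eq_intCast] at this
  rw [Set.mem_ofPred_eq, this]
  split_ifs <;> simp_all

theorem isASet_image_pow {m : ℕ} (hm : (Nat.card G).Coprime m) {S : Set G}
    (hS : A.IsASet S) : A.IsASet ((· ^ m) '' S) := by
  induction m using Nat.recOnMul generalizing S with
  | zero =>
    rcases S.eq_empty_or_nonempty with rfl | hne
    · simpa using A.isASet_empty
    · simpa [hne.image_const] using A.isASet_of_mem A.one_mem
  | one => simpa using hS
  | prime q hq =>
    have : Fact q.Prime := ⟨hq⟩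
    exact hS.image fun X hX => A.isASet_image_pow_of_prime hm hX
  | mul a b ha hb =>
    simp_rw [pow_mul]
    rw [← Set.image_image (· ^ b) (· ^ a)]
    exact hb (Nat.Coprime.coprime_mul_left_right hm)
      (ha (Nat.Coprime.coprime_mul_right_right hm) hS)

/-- Schur's multiplier theorem. -/
theorem image_pow_mem_basicSets {m : ℕ} (hm : (Nat.card G).Coprime m) {X : Set G}
    (hX : X ∈ A.basicSets) : (· ^ m) '' X ∈ A.basicSets :=
  A.image_mem_basicSets hm.pow_left_bijective.injective (fun _ => A.isASet_image_pow hm) hX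

theorem image_prodMap_pow_mem_basicSets {H K : Type*} [CommGroup H] [Fintype H] [CommGroup K]
    [Fintype K] (A : SchurRing (H × K))
    (hHK : (Nat.card H).Coprime (Nat.card K)) {k m : ℕ} (hk : (Nat.card H).Coprime k)
    (hm : (Nat.card K).Coprime m) {X : Set (H × K)} (hX : X ∈ A.basicSets) :
    Prod.map (· ^ k) (· ^ m) '' X ∈ A.basicSets := by
  obtain ⟨n, hnk, hnm⟩ := Nat.chineseRemainder hHK k m
  have hn : (Nat.card (H × K)).Coprime n := by
    rw [Nat.card_prod]
    refine Nat.Coprime.mul_left ?_ ?_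
    · rwa [Nat.Coprime, Nat.gcd_comm, hnk.gcd_eq, Nat.gcd_comm]
    · rwa [Nat.Coprime, Nat.gcd_comm, hnm.gcd_eq, Nat.gcd_comm]
  convert A.image_pow_mem_basicSets hn hX using 2 with g
  exact Prod.ext (pow_eq_pow_of_modEq_natCard g.1 hnk.symm)
    (pow_eq_pow_of_modEq_natCard g.2 hnm.symm)

end Multiplier

end SchurRing

section Fibre

variable {α β : Type*}

/-- The paper's `X(a)`. -/
def fibre (X : Set (α × β)) (a : α) : Set β := {x | (a, x) ∈ X}

def fibreClass (X : Set (α × β)) (a : α) : Set α :=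
  {b ∈ Prod.fst '' X | fibre X b = fibre X a}

/-- The paper's `Π_A(X)`. -/
def fibrePartition (X : Set (α × β)) : Set (Set α) :=
  {T | ∃ a ∈ Prod.fst '' X, T = fibreClass X a}

def HasDisjointFibres (X : Set (α × β)) : Prop :=
  ∀ ⦃a b : α⦄ ⦃s : β⦄, (a, s) ∈ X → (b, s) ∈ X → fibre X a = fibre X b

variable {X : Set (α × β)}

theorem mem_image_fst_iff {a : α} : a ∈ Prod.fst '' X ↔ (fibre X a).Nonempty :=
  ⟨fun ⟨x, hx, hxa⟩ => ⟨x.2, hxa ▸ hx⟩, fun ⟨s, hs⟩ => ⟨(a, s), hs, rfl⟩⟩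

theorem self_mem_fibreClass {a : α} (ha : a ∈ Prod.fst '' X) : a ∈ fibreClass X a := ⟨ha, rfl⟩

theorem fibreClass_eq_of_mem {a b : α} (h : b ∈ fibreClass X a) :
    fibreClass X b = fibreClass X a := by
  simp only [fibreClass, h.2]

theorem mem_image_fst_of_mem_fibreClass {a c : α} (h : c ∈ fibreClass X a) :
    a ∈ Prod.fst '' X :=
  mem_image_fst_iff.2 (h.2 ▸ mem_image_fst_iff.1 h.1)

theorem subset_and_nonempty_of_mem_fibrePartition {Y : Set α} (hY : Y ∈ fibrePartition X) :
    Y ⊆ Prod.fst '' X ∧ Y.Nonempty := by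
  obtain ⟨a, ha, rfl⟩ := hY
  exact ⟨fun _ hb => hb.1, a, self_mem_fibreClass ha⟩

theorem existsUnique_mem_fibrePartition {a : α} (ha : a ∈ Prod.fst '' X) :
    ∃! Y, Y ∈ fibrePartition X ∧ a ∈ Y :=
  ⟨fibreClass X a, ⟨⟨a, ha, rfl⟩, self_mem_fibreClass ha⟩,
    fun _ ⟨⟨_, _, hY⟩, haY⟩ => hY ▸ (fibreClass_eq_of_mem (hY ▸ haY)).symm⟩

theorem HasDisjointFibres.fibreClass_eq (hX : HasDisjointFibres X) {a : α} {s : β}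
    (has : (a, s) ∈ X) : fibreClass X a = {u | (u, s) ∈ X} := by
  ext u
  refine ⟨fun ⟨_, hu⟩ => (hu ▸ has : s ∈ fibre X u), fun hus => ⟨⟨_, hus, rfl⟩, hX hus has⟩⟩

theorem fibre_image_prodMap {f : α → α} (hf : Function.Injective f) (g : β → β)
    (X : Set (α × β)) (a : α) : fibre (Prod.map f g '' X) (f a) = g '' fibre X a := by
  ext x
  simp only [fibre, Set.mem_image, Prod.exists, Prod.map, Prod.mk.injEq, hf.eq_iff]
  constructor
  · rintro ⟨_, w, hw, rfl, rfl⟩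
    exact ⟨w, hw, rfl⟩
  · rintro ⟨w, hw, rfl⟩
    exact ⟨a, w, hw, rfl, rfl⟩

section Inv

variable [InvolutiveInv α]

theorem fibreClass_inv {f : β → β} (hf : Function.Injective f)
    (hXf : ∀ c, fibre X c⁻¹ = f '' fibre X c) (a : α) :
    (fibreClass X a)⁻¹ = fibreClass X a⁻¹ := by
  ext c
  have hfa : fibre X a = f '' fibre X a⁻¹ := by rw [← hXf, inv_inv]
  change (_ ∧ _) ↔ (_ ∧ _)
  rw [mem_image_fst_iff, mem_image_fst_iff, hXf c, hfa, Set.image_nonempty,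
    (Set.image_injective.2 hf).eq_iff]

theorem image_inv_fibrePartition {f : β → β} (hf : Function.Injective f)
    (hXf : ∀ c, fibre X c⁻¹ = f '' fibre X c) :
    (fun Y => Y⁻¹) '' fibrePartition X = fibrePartition X := by
  have hinv : ∀ c, c⁻¹ ∈ Prod.fst '' X ↔ c ∈ Prod.fst '' X := fun c => by
    simp only [mem_image_fst_iff, hXf, Set.image_nonempty]
  ext Y
  constructor
  · rintro ⟨_, ⟨a, ha, rfl⟩, rfl⟩
    exact ⟨a⁻¹, (hinv a).2 ha, fibreClass_inv hf hXf a⟩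
  · rintro ⟨a, ha, rfl⟩
    refine ⟨fibreClass X a⁻¹, ⟨a⁻¹, (hinv a).2 ha, rfl⟩, ?_⟩
    simp only [fibreClass_inv hf hXf, inv_inv]

theorem fibre_inv_of_fibreClass_inv {a : α} (ha : a ∈ Prod.fst '' X)
    (h : (fibreClass X a)⁻¹ = fibreClass X a) : fibre X a⁻¹ = fibre X a :=
  (h.symm ▸ (by simpa using self_mem_fibreClass ha) : a⁻¹ ∈ fibreClass X a).2

theorem fibreClass_inv_of_forall_fibre_inv (h : ∀ c, fibre X c⁻¹ = fibre X c) (a : α) :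
    (fibreClass X a)⁻¹ = fibreClass X a := by
  rw [fibreClass_inv Function.injective_id (by simpa using h) a]
  simp only [fibreClass, h a]

end Inv

end Fibre

section Counting

variable {α β : Type*} [CommGroup α] [Fintype α] {X : Set (α × β)}

theorem sum_card_fibrePartition (b : α) :
    ∑ Z ∈ (Set.toFinite (fibrePartition X)).toFinset, {u ∈ Z.toFinset | b * u ∈ Z}.card =
      (Finset.univ.filter fun v => b * v ∈ fibreClass X v).card := by
  rw [Finset.card_eq_sum_card_fiberwise (f := fibreClass X)
    (t := (Set.toFinite (fibrePartition X)).toFinset) fun v hv =>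
    (Set.Finite.mem_toFinset _).2
      ⟨v, mem_image_fst_of_mem_fibreClass (Finset.mem_filter.1 hv).2, rfl⟩]
  refine Finset.sum_congr rfl fun Z hZ => ?_
  obtain ⟨a, -, rfl⟩ := (Set.Finite.mem_toFinset _).1 hZ
  congr 1
  ext u
  simp only [Finset.mem_filter, Set.mem_toFinset, Finset.mem_univ, true_and]
  constructor
  · rintro ⟨hu, hbu⟩
    exact ⟨(fibreClass_eq_of_mem hu).symm ▸ hbu, fibreClass_eq_of_mem hu⟩
  · rintro ⟨hbu, hua⟩
    exact ⟨hua ▸ self_mem_fibreClass (mem_image_fst_of_mem_fibreClass hbu), hua ▸ hbu⟩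

theorem card_filter_mul_fst_mem_eq [Fintype β] (hX : HasDisjointFibres X) {k : ℕ}
    (hk : ∀ a ∈ Prod.fst '' X, (fibre X a).ncard = k) (b : α) :
    {x ∈ X.toFinset | (b * x.1, x.2) ∈ X}.card =
      k * (Finset.univ.filter fun v => b * v ∈ fibreClass X v).card := by
  rw [Finset.card_eq_sum_card_fiberwise (f := Prod.fst) (t := Finset.univ)
    fun _ _ => Finset.mem_univ _]
  have hterm : ∀ v, {x ∈ {x ∈ X.toFinset | (b * x.1, x.2) ∈ X} | x.1 = v}.card =
      if b * v ∈ fibreClass X v then k else 0 := by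
    intro v
    split_ifs with hbv
    · have hmem : ∀ w, (b * v, w) ∈ X ↔ (v, w) ∈ X := fun w => Set.ext_iff.1 hbv.2 w
      rw [← hk v (mem_image_fst_of_mem_fibreClass hbv), ← Set.ncard_coe_finset,
        ← Set.ncard_image_of_injective (fibre X v) (Prod.mk_right_injective v)]
      congr 1
      ext ⟨u, w⟩
      simp only [Finset.coe_filter, Finset.mem_filter, Set.mem_toFinset, Set.mem_image, fibre,
        Set.mem_ofPred_eq, Prod.mk.injEq]
      constructor
      · rintro ⟨⟨hx, -⟩, rfl⟩
        exact ⟨w, hx, rfl, rfl⟩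
      · rintro ⟨w, hx, rfl, rfl⟩
        exact ⟨⟨hx, (hmem w).2 hx⟩, rfl⟩
    · refine Finset.card_eq_zero.2 (Finset.eq_empty_of_forall_notMem ?_)
      rintro ⟨u, w⟩ hx
      simp only [Finset.mem_filter, Set.mem_toFinset] at hx
      obtain ⟨⟨hvw, hbvw⟩, rfl⟩ := hx
      exact hbv ⟨⟨_, hbvw, rfl⟩, hX hbvw hvw⟩
  simp_rw [hterm]
  rw [Finset.sum_ite, Finset.sum_const_zero, add_zero, Finset.sum_const, smul_eq_mul, mul_comm]

theorem coeff_finsum_fibrePartition [Fintype β] (c : α) :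
    (∑ᶠ Y ∈ fibrePartition X, grpSum Y * grpSum Y⁻¹).coeff c =
      (Finset.univ.filter fun v => c * v ∈ fibreClass X v).card := by
  rw [finsum_mem_eq_finite_toFinset_sum _ (Set.toFinite _), coeff_sum, Finset.sum_apply']
  simp_rw [coeff_grpSum_mul_grpSum_inv]
  rw [← Nat.cast_sum, sum_card_fibrePartition]

end Counting

section PrimeCyclic

variable {p : ℕ} [Fact p.Prime]

theorem exists_coprime_pow_eq {s s' : Multiplicative (ZMod p)} (h : s = 1 ↔ s' = 1) :
    ∃ m, p.Coprime m ∧ s ^ m = s' := by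
  by_cases hs : s = 1
  · exact ⟨1, Nat.coprime_one_right p, by rw [pow_one, hs, (h.1 hs)]⟩
  have hcard : Nat.card (Multiplicative (ZMod p)) = p := by simp
  obtain ⟨m, rfl⟩ :=
    (Submonoid.mem_powers_iff _ _).1 (mem_powers_of_prime_card hcard hs (g' := s'))
  refine ⟨m, (Nat.Prime.coprime_iff_not_dvd Fact.out).2 fun ⟨n, hn⟩ => hs (h.2 ?_), rfl⟩
  have hsp : s ^ p = 1 := by simpa using pow_card_eq_one (x := s)
  rw [hn, pow_mul, hsp, one_pow]

end PrimeCyclic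

section Dense

variable {H : Type*} [CommGroup H] [Fintype H] {p : ℕ} [Fact p.Prime]
  {A : SchurRing (H × Multiplicative (ZMod p))} {X : Set (H × Multiplicative (ZMod p))}

theorem image_map_id_pow_mem_basicSets (hHp : (Nat.card H).Coprime p) {m : ℕ}
    (hm : p.Coprime m) (hX : X ∈ A.basicSets) : Prod.map id (· ^ m) '' X ∈ A.basicSets := by
  have := A.image_prodMap_pow_mem_basicSets (k := 1) (by simpa using hHp)
    (Nat.coprime_one_right _) (by simpa using hm) hX
  simp only [pow_one] at this
  exact this

theorem image_map_inv_pow_mem_basicSets (hHp : (Nat.card H).Coprime p) {m : ℕ}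
    (hm : p.Coprime m) (hX : X ∈ A.basicSets) :
    Prod.map (·⁻¹) (· ^ m) '' X ∈ A.basicSets := by
  have hpos : 1 ≤ Nat.card H := Nat.card_pos
  convert A.image_prodMap_pow_mem_basicSets (k := Nat.card H - 1) (by simpa using hHp)
    ((Nat.coprime_self_sub_right hpos).2 (Nat.coprime_one_right _)) (by simpa using hm) hX
    using 3
  funext h
  refine (eq_inv_of_mul_eq_one_left ?_).symm
  rw [← pow_succ, Nat.sub_add_cancel hpos, pow_card_eq_one']

theorem snd_eq_one_iff_of_mem (hdenseH : A.IsASubgroup ((⊤ : Subgroup H).prod ⊥))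
    (hX : X ∈ A.basicSets) {x y : H × Multiplicative (ZMod p)} (hx : x ∈ X) (hy : y ∈ X) :
    x.2 = 1 ↔ y.2 = 1 := by
  have key : ∀ x ∈ X, ∀ y ∈ X, x.2 = 1 → y.2 = 1 := fun x hx y hy h1 => by
    have := SchurRing.IsASet.subset hdenseH hX hx (by simpa [Subgroup.mem_prod] using h1) hy
    simpa [Subgroup.mem_prod] using this
  exact ⟨key x hx y hy, key y hy x hx⟩

theorem exists_pow_eq_of_mem (hHp : (Nat.card H).Coprime p)
    (hdenseH : A.IsASubgroup ((⊤ : Subgroup H).prod ⊥)) (hX : X ∈ A.basicSets)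
    {a : H} {s s' : Multiplicative (ZMod p)} (hs : (a, s) ∈ X) (hs' : (a, s') ∈ X) :
    ∃ m, p.Coprime m ∧ s ^ m = s' ∧ Prod.map id (· ^ m) '' X = X := by
  obtain ⟨m, hm, rfl⟩ := exists_coprime_pow_eq (snd_eq_one_iff_of_mem hdenseH hX hs hs')
  exact ⟨m, hm, rfl, A.eq_of_mem_of_mem (image_map_id_pow_mem_basicSets hHp hm hX) hX
    ⟨_, hs, rfl⟩ hs'⟩

theorem hasDisjointFibres_of_mem_basicSets (hHp : (Nat.card H).Coprime p)
    (hdenseH : A.IsASubgroup ((⊤ : Subgroup H).prod ⊥)) (hX : X ∈ A.basicSets) :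
    HasDisjointFibres X := by
  have key : ∀ a b s, (a, s) ∈ X → (b, s) ∈ X → fibre X a ⊆ fibre X b := by
    intro a b s ha hb x hx
    obtain ⟨m, -, rfl, hXm⟩ := exists_pow_eq_of_mem hHp hdenseH hX ha hx
    exact (hXm ▸ ⟨_, hb, rfl⟩ : (b, s ^ m) ∈ X)
  exact fun a b s ha hb => (key a b s ha hb).antisymm (key b a s hb ha)

theorem ncard_column_eq (hdenseH : A.IsASubgroup ((⊤ : Subgroup H).prod ⊥))
    (hX : X ∈ A.basicSets) {a b : H} {s s' : Multiplicative (ZMod p)} (hs : (a, s) ∈ X)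
    (hs' : (b, s') ∈ X) : {u | (u, s) ∈ X}.ncard = {u | (u, s') ∈ X}.ncard := by
  have h := A.coeff_eq_of_mem_toSubring (A.toSubring.mul_mem (A.grpSum_mem_toSubring hX)
    (hdenseH.grpSum_mem_toSubring)) hX hs hs'
  rw [coeff_mul_grpSum_prod_top_bot, coeff_mul_grpSum_prod_top_bot, sum_coeff_grpSum_comp,
    sum_coeff_grpSum_comp] at h
  exact_mod_cast h

theorem ncard_fibre_eq (hdenseP : A.IsASubgroup ((⊥ : Subgroup H).prod ⊤))
    (hX : X ∈ A.basicSets) {a b : H} (ha : a ∈ Prod.fst '' X) (hb : b ∈ Prod.fst '' X) :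
    (fibre X a).ncard = (fibre X b).ncard := by
  obtain ⟨s, hs⟩ := mem_image_fst_iff.1 ha
  obtain ⟨s', hs'⟩ := mem_image_fst_iff.1 hb
  have h := A.coeff_eq_of_mem_toSubring (A.toSubring.mul_mem (A.grpSum_mem_toSubring hX)
    (hdenseP.grpSum_mem_toSubring)) hX hs hs'
  rw [coeff_mul_grpSum_prod_bot_top, coeff_mul_grpSum_prod_bot_top, sum_coeff_grpSum_comp,
    sum_coeff_grpSum_comp] at h
  exact_mod_cast h

theorem ncard_fibreClass_eq (hHp : (Nat.card H).Coprime p)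
    (hdenseH : A.IsASubgroup ((⊤ : Subgroup H).prod ⊥)) (hX : X ∈ A.basicSets) {a b : H}
    (ha : a ∈ Prod.fst '' X) (hb : b ∈ Prod.fst '' X) :
    (fibreClass X a).ncard = (fibreClass X b).ncard := by
  obtain ⟨s, hs⟩ := mem_image_fst_iff.1 ha
  obtain ⟨s', hs'⟩ := mem_image_fst_iff.1 hb
  have hXd := hasDisjointFibres_of_mem_basicSets hHp hdenseH hX
  rw [hXd.fibreClass_eq hs, hXd.fibreClass_eq hs']
  exact ncard_column_eq hdenseH hX hs hs'

theorem exists_fibre_inv_eq_image_pow (hHp : (Nat.card H).Coprime p)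
    (hdenseH : A.IsASubgroup ((⊤ : Subgroup H).prod ⊥)) (hX : X ∈ A.basicSets)
    (hinv : (Prod.fst '' X)⁻¹ = Prod.fst '' X) :
    ∃ m, p.Coprime m ∧ ∀ c, fibre X c⁻¹ = (· ^ m) '' fibre X c := by
  obtain ⟨⟨a, s⟩, has⟩ := A.nonempty_mem X hX
  have ha : a⁻¹ ∈ Prod.fst '' X := hinv ▸ Set.inv_mem_inv.2 ⟨_, has, rfl⟩
  obtain ⟨s', has'⟩ := mem_image_fst_iff.1 ha
  obtain ⟨m, hm, rfl⟩ := exists_coprime_pow_eq (snd_eq_one_iff_of_mem hdenseH hX has has')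
  have hXm : Prod.map (·⁻¹) (· ^ m) '' X = X :=
    A.eq_of_mem_of_mem (image_map_inv_pow_mem_basicSets hHp hm hX) hX ⟨_, has, rfl⟩ has'
  refine ⟨m, hm, fun c => ?_⟩
  conv_lhs => rw [← hXm]
  exact fibre_image_prodMap inv_injective _ X c

theorem fibrePartition_inv_eq_self_or_ne (hHp : (Nat.card H).Coprime p)
    (hX : X ∈ A.basicSets) {m : ℕ} (hm : p.Coprime m)
    (hXm : ∀ c, fibre X c⁻¹ = (· ^ m) '' fibre X c) :
    (∀ Y ∈ fibrePartition X, Y⁻¹ = Y) ∨ ∀ Y ∈ fibrePartition X, Y⁻¹ ≠ Y := by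
  refine or_iff_not_imp_right.2 fun h => ?_
  obtain ⟨_, ⟨a, ha, rfl⟩, hYa⟩ : ∃ Y ∈ fibrePartition X, Y⁻¹ = Y := by simpa using h
  obtain ⟨s, hs⟩ := mem_image_fst_iff.1 ha
  have hsm : s ^ m ∈ fibre X a := by
    rw [← fibre_inv_of_fibreClass_inv ha hYa, hXm]
    exact ⟨s, hs, rfl⟩
  have hψ : Prod.map id (· ^ m) '' X = X :=
    A.eq_of_mem_of_mem (image_map_id_pow_mem_basicSets hHp hm hX) hX ⟨(a, s), hs, rfl⟩ hsm
  have hfib : ∀ c, fibre X c⁻¹ = fibre X c := fun c => by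
    rw [hXm, ← fibre_image_prodMap Function.injective_id, hψ, id]
  exact fun Y ⟨b, _, hY⟩ => hY ▸ fibreClass_inv_of_forall_fibre_inv hfib b

theorem coeff_grpSum_mul_grpSum_inv_eq (hHp : (Nat.card H).Coprime p)
    (hdenseH : A.IsASubgroup ((⊤ : Subgroup H).prod ⊥))
    (hdenseP : A.IsASubgroup ((⊥ : Subgroup H).prod ⊤)) (hX : X ∈ A.basicSets) {a b : H}
    (ha : a ∈ Prod.fst '' X) (hb : b ∈ Prod.fst '' X) :
    (grpSum X * grpSum X⁻¹).coeff (a, 1) = (grpSum X * grpSum X⁻¹).coeff (b, 1) := by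
  set N := grpSum X * grpSum X⁻¹
  have hN : N ∈ A.toSubring :=
    A.toSubring.mul_mem (A.grpSum_mem_toSubring hX) (A.grpSum_mem_toSubring (A.inv_mem X hX))
  obtain ⟨s, hs⟩ := mem_image_fst_iff.1 ha
  obtain ⟨s', hs'⟩ := mem_image_fst_iff.1 hb
  obtain ⟨m, hm, rfl⟩ := exists_coprime_pow_eq (snd_eq_one_iff_of_mem hdenseH hX hs hs')
  by_cases h1 : s = 1
  · subst h1
    rw [one_pow] at hs'
    exact A.coeff_eq_of_mem_toSubring hN hX hs hs'
  -- Summed over `w`, the coefficients at `(a, w)` form a coefficient of `N · P̲` on `X`; for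
  -- `w ≠ 1` those at `(a, w)` and `(b, w ^ m)` agree, so the ones at `(a, 1)` and `(b, 1)` do too.
  have htotal : ∑ w, N.coeff (a, w) = ∑ w, N.coeff (b, w) := by
    have := A.coeff_eq_of_mem_toSubring
      (A.toSubring.mul_mem hN (hdenseP.grpSum_mem_toSubring)) hX hs hs'
    rwa [coeff_mul_grpSum_prod_bot_top, coeff_mul_grpSum_prod_bot_top] at this
  have hterm : ∀ w ≠ 1, N.coeff (a, w) = N.coeff (b, w ^ m) := by
    intro w hw
    obtain ⟨t, ht, rfl⟩ := exists_coprime_pow_eq (s' := w) (iff_of_false h1 hw)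
    -- both points lie in the basic set `ψ_t(X)`
    refine A.coeff_eq_of_mem_toSubring hN (image_map_id_pow_mem_basicSets hHp ht hX)
      ⟨_, hs, rfl⟩ ⟨_, hs', ?_⟩
    simp only [Prod.map, id, ← pow_mul, mul_comm]
  have hm' : (Nat.card (Multiplicative (ZMod p))).Coprime m := by simpa using hm
  have hsplit : ∀ f : Multiplicative (ZMod p) → ℤ, ∑ w, f w = f 1 + ∑ w ∈ {1}ᶜ, f w :=
    fun f => (Fintype.sum_eq_add_sum_compl 1 f)
  rw [← (powCoprime hm').sum_comp (fun w => N.coeff (b, w)), hsplit, hsplit,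
    Finset.sum_congr rfl fun w hw => hterm w (by simpa using hw)] at htotal
  simpa using htotal

theorem exists_hadamard_eq_smul (hHp : (Nat.card H).Coprime p)
    (hdenseH : A.IsASubgroup ((⊤ : Subgroup H).prod ⊥))
    (hdenseP : A.IsASubgroup ((⊥ : Subgroup H).prod ⊤)) (hX : X ∈ A.basicSets) :
    ∃ α : ℕ, hadamard (grpSum (Prod.fst '' X))
      (∑ᶠ Y ∈ fibrePartition X, grpSum Y * grpSum Y⁻¹) = (α : ℤ) • grpSum (Prod.fst '' X) := by
  obtain ⟨⟨a, s⟩, has⟩ := A.nonempty_mem X hX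
  have ha : a ∈ Prod.fst '' X := ⟨_, has, rfl⟩
  have hN : ∀ b, (grpSum X * grpSum X⁻¹).coeff (b, 1) = ((fibre X a).ncard *
      (Finset.univ.filter fun v => b * v ∈ fibreClass X v).card : ℕ) := by
    intro b
    rw [coeff_grpSum_mul_grpSum_inv, ← card_filter_mul_fst_mem_eq
      (hasDisjointFibres_of_mem_basicSets hHp hdenseH hX)
      (fun c hc => ncard_fibre_eq hdenseP hX hc ha) b]
    simp [Prod.mul_def]
  have hk : 0 < (fibre X a).ncard := (Set.ncard_pos (Set.toFinite _)).2 ⟨s, has⟩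
  refine ⟨(Finset.univ.filter fun v => a * v ∈ fibreClass X v).card,
    hadamard_grpSum_eq_smul fun b hb => ?_⟩
  have := coeff_grpSum_mul_grpSum_inv_eq hHp hdenseH hdenseP hX hb ha
  rw [hN, hN] at this
  rw [coeff_finsum_fibrePartition]
  exact_mod_cast Nat.eq_of_mul_eq_mul_left hk (by exact_mod_cast this)

end Dense

theorem fibre_equivalence_partition_is_regular (p : ℕ) [Fact p.Prime] (hp : 3 < p)
    (A : SchurRing (E₉ × Multiplicative (ZMod p)))
    -- 𝒜 is dense
    (hdenseA : A.IsASubgroup ((⊤ : Subgroup E₉).prod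
        (⊥ : Subgroup (Multiplicative (ZMod p)))))
    (hdenseP : A.IsASubgroup ((⊥ : Subgroup E₉).prod
        (⊤ : Subgroup (Multiplicative (ZMod p)))))
    (X : Set (E₉ × Multiplicative (ZMod p))) (hX : X ∈ A.basicSets) :
    -- Π_A(X), the partition of X_A by a ∼ b ⇔ X(a) = X(b), is regular
    IsRegularPartition (Prod.fst '' X)
      {T : Set E₉ | ∃ a ∈ Prod.fst '' X,
        T = {b ∈ Prod.fst '' X |
              {x : Multiplicative (ZMod p) | (b, x) ∈ X} =
              {x : Multiplicative (ZMod p) | (a, x) ∈ X}}} := by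
  have hHp : (Nat.card E₉).Coprime p := by
    have : Nat.card E₉ = 3 ^ 2 := by simp
    rw [this, Nat.coprime_pow_left_iff two_pos,
      Nat.coprime_primes Nat.prime_three Fact.out]
    omega
  refine ⟨fun Y hY => subset_and_nonempty_of_mem_fibrePartition hY,
    fun a ha => existsUnique_mem_fibrePartition ha, ?_, fun hinv => ?_⟩
  · rintro _ ⟨a, ha, rfl⟩ _ ⟨b, hb, rfl⟩
    exact ncard_fibreClass_eq hHp hdenseA hX ha hb
  obtain ⟨m, hm, hXm⟩ := exists_fibre_inv_eq_image_pow hHp hdenseA hX hinv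
  have hinj : Function.Injective (· ^ m : Multiplicative (ZMod p) → _) :=
    (Nat.Coprime.pow_left_bijective (by simpa [Nat.coprime_comm] using hm)).injective
  exact ⟨image_inv_fibrePartition hinj hXm, fibrePartition_inv_eq_self_or_ne hHp hX hm hXm,
    exists_hadamard_eq_smul hHp hdenseA hdenseP hX⟩
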